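/- There exists a constant C > 0 such that for all even integers n ≥ 4, |Cov(n, n/2) − 1/(π(n−2))| ≤ C/n². -/

import Mathlib

/-- Binomial coefficient `C(a, b)` for an integer lower index, with the convention that
it is `0` when `b < 0` (and `Nat.choose` already gives `0` when `b > a`). -/
def intChoose (a : ℕ) (b : ℤ) : ℕ := if 0 ≤ b then a.choose b.toNat else 0

/-- The majority fold-covariance
`Cov(n, m) = 2^{−n}·∑_{j=0}^{m−1} C(m−1, j)²·C(n−2m, ⌊(n−m)/2⌋ − j)`. -/
noncomputable def majCov (n m : ℕ) : ℝ :=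
  2 ^ (-(n : ℤ)) * ∑ j ∈ Finset.range m,
    ((m - 1).choose j : ℝ) ^ 2 *
      (intChoose (n - 2 * m) ((((n - m) / 2 : ℕ) : ℤ) - (j : ℤ)) : ℝ)

/-!
Only the term `j = ⌊m/2⌋` survives in `Cov(2m, m)`, and in both parities of `m` it equals `a_K² / 4`,
where `K = ⌊m/2⌋` and `a_K = C(2K, K) / 4^K`. Wallis' bounds `(2K+1)/(2K+2) · π/2 ≤ W_K ≤ π/2`, together
with `a_K² (2K+1) W_K = 1`, squeeze `a_K² / 4` between `1/(π(4K+2))` and `1/(π · 4K)`. Since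
`n = 2m ∈ {4K, 4K+2}`, the target `1/(π(n-2))` lies within `O(1/n²)` of both ends.
-/
open Real
open scoped Nat

theorem Nat.centralBinom_succ_eq_two_mul_choose (n : ℕ) :
    (n + 1).centralBinom = 2 * (2 * n + 1).choose n := by
  rw [Nat.centralBinom_eq_two_mul_choose, show 2 * (n + 1) = 2 * n + 1 + 1 by ring,
    Nat.choose_succ_succ', Nat.choose_symm_half]
  ring

theorem centralBinom_div_four_pow_sq_mul_W (K : ℕ) :
    ((K.centralBinom : ℝ) / 4 ^ K) ^ 2 * (2 * K + 1) * Wallis.W K = 1 := by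
  have hcb : (K.centralBinom : ℝ) = (2 * K)! / (K ! * K !) := by
    rw [Nat.centralBinom, Nat.cast_choose ℝ (by omega : K ≤ 2 * K), show 2 * K - K = K by omega]
  have h16 : (2 : ℝ) ^ (4 * K) = (4 ^ K) ^ 2 := by
    rw [← pow_mul, show (4 : ℝ) = 2 ^ 2 by norm_num, ← pow_mul]
    ring_nf
  have hK : (0 : ℝ) < K ! := mod_cast K.factorial_pos
  have h2K : (0 : ℝ) < (2 * K)! := mod_cast (2 * K).factorial_pos
  rw [Wallis.W_eq_factorial_ratio, hcb, h16]
  field_simp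

theorem two_div_pi_le_sq_centralBinom_div_four_pow_mul (K : ℕ) :
    2 / π ≤ ((K.centralBinom : ℝ) / 4 ^ K) ^ 2 * (2 * K + 1) := by
  have hW := centralBinom_div_four_pow_sq_mul_W K
  have hWpos := Wallis.W_pos K
  rw [div_le_iff₀ pi_pos]
  nlinarith [Wallis.W_le K]

theorem sq_centralBinom_div_four_pow_mul_le (K : ℕ) :
    ((K.centralBinom : ℝ) / 4 ^ K) ^ 2 * K ≤ 1 / π := by
  set y := ((K.centralBinom : ℝ) / 4 ^ K) ^ 2
  have hW : y * (2 * K + 1) * Wallis.W K = 1 := centralBinom_div_four_pow_sq_mul_W K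
  have hy : 0 ≤ y * (2 * K + 1) := by positivity
  have hle : y * (2 * K + 1) * ((2 * K + 1) * (π / 2)) ≤ 2 * K + 2 := by
    have h := mul_le_mul_of_nonneg_left (Wallis.le_W K) hy
    rw [hW, div_mul_eq_mul_div, mul_div_assoc', div_le_one (by positivity)] at h
    linarith
  have hK : (0 : ℝ) ≤ K := K.cast_nonneg
  have key : y * K * π * (2 * K + 1) ^ 2 ≤ 1 * (2 * K + 1) ^ 2 := by
    nlinarith [mul_le_mul_of_nonneg_left hle hK]
  rw [le_div_iff₀ pi_pos]
  exact le_of_mul_le_mul_right key (by positivity)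

theorem intChoose_zero (z : ℤ) : intChoose 0 z = if z = 0 then 1 else 0 := by
  unfold intChoose
  split_ifs with h0 hz hz
  · subst hz; rfl
  · exact Nat.choose_eq_zero_of_lt (by omega)
  · omega
  · rfl

theorem majCov_two_mul_self {m : ℕ} (hm : 0 < m) :
    majCov (2 * m) m = ((m - 1).choose (m / 2) : ℝ) ^ 2 / 4 ^ m := by
  unfold majCov
  simp_rw [show 2 * m - 2 * m = 0 by omega, show 2 * m - m = m by omega, intChoose_zero,
    sub_eq_zero, Nat.cast_inj, Nat.cast_ite, Nat.cast_one, Nat.cast_zero, mul_ite, mul_one,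
    mul_zero, Finset.sum_ite_eq, if_pos (Finset.mem_range.mpr (Nat.div_lt_self hm one_lt_two)),
    zpow_neg, zpow_natCast, pow_mul]
  norm_num
  ring

theorem choose_pred_half_sq_div_four_pow {m : ℕ} (hm : 0 < m) :
    ((m - 1).choose (m / 2) : ℝ) ^ 2 / 4 ^ m =
      (((m / 2).centralBinom : ℝ) / 4 ^ (m / 2)) ^ 2 / 4 := by
  obtain ⟨K, rfl | rfl⟩ : ∃ K, m = 2 * K + 1 ∨ m = 2 * K + 2 := ⟨(m - 1) / 2, by omega⟩
  · rw [show 2 * K + 1 - 1 = 2 * K by omega, show (2 * K + 1) / 2 = K by omega,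
      ← Nat.centralBinom_eq_two_mul_choose]
    ring
  · rw [show 2 * K + 2 - 1 = 2 * K + 1 by omega, show (2 * K + 2) / 2 = K + 1 by omega,
      Nat.centralBinom_succ_eq_two_mul_choose, ← Nat.choose_symm_half]
    push_cast
    ring

theorem abs_sub_one_div_mul_sub_two_le {p x c n : ℝ} (hp : 0 < p) (hn : 4 ≤ n) (hnc : n ≤ c)
    (hcn : c ≤ n + 2) (hlo : 1 / (p * c) ≤ x) (hhi : x ≤ 1 / (p * (c - 2))) :
    |x - 1 / (p * (n - 2))| ≤ 8 / p / n ^ 2 := by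
  have hn2 : 0 < n - 2 := by linarith
  have hc : 0 < c := by linarith
  have hhi' : x ≤ 1 / (p * (n - 2)) := hhi.trans
    (one_div_le_one_div_of_le (by positivity) (mul_le_mul_of_nonneg_left (by linarith) hp.le))
  rw [abs_sub_comm, abs_of_nonneg (sub_nonneg.mpr hhi')]
  calc 1 / (p * (n - 2)) - x ≤ 1 / (p * (n - 2)) - 1 / (p * c) := by linarith
    _ = (c - n + 2) / p / ((n - 2) * c) := by field_simp; ring
    _ ≤ 8 / p / n ^ 2 := by
      rw [div_div, div_div, div_le_div_iff₀ (by positivity) (by positivity)]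
      have h4 : c - n + 2 ≤ 4 := by linarith
      have h2 : n ^ 2 ≤ 2 * ((n - 2) * c) := by nlinarith
      nlinarith [mul_le_mul_of_nonneg_right h4 (by positivity : (0 : ℝ) ≤ p * n ^ 2),
        mul_le_mul_of_nonneg_left h2 (by positivity : (0 : ℝ) ≤ 4 * p)]

/-- Part (E), two-fold cross-validation: there is `C > 0` such that for all even `n ≥ 4`,
`|Cov(n, n/2) − 1/(π(n−2))| ≤ C/n²`. -/
theorem majority_cov_two_fold :
    ∃ C : ℝ, 0 < C ∧ ∀ n : ℕ, 4 ≤ n → Even n →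
      |majCov n (n / 2) - 1 / (Real.pi * ((n : ℝ) - 2))| ≤ C / (n : ℝ) ^ 2 := by
  refine ⟨8 / π, by positivity, ?_⟩
  rintro n hn ⟨m, rfl⟩
  rw [← two_mul] at hn ⊢
  rw [Nat.mul_div_cancel_left m two_pos, majCov_two_mul_self (by omega),
    choose_pred_half_sq_div_four_pow (by omega)]
  set K := m / 2
  have hK : (0 : ℝ) < K := mod_cast (show 0 < K by omega)
  have hmK : (2 * m : ℝ) ≤ 4 * K + 2 := mod_cast (show 2 * m ≤ 4 * K + 2 by omega)
  have hKm : (4 * K : ℝ) ≤ 2 * m := mod_cast (show 4 * K ≤ 2 * m by omega)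
  apply abs_sub_one_div_mul_sub_two_le pi_pos (c := 4 * K + 2)
  · exact_mod_cast hn
  · push_cast; exact hmK
  · push_cast; linarith
  · have h := two_div_pi_le_sq_centralBinom_div_four_pow_mul K
    rw [div_le_iff₀ pi_pos] at h
    rw [div_le_div_iff₀ (by positivity) (by norm_num)]
    linarith
  · have h := sq_centralBinom_div_four_pow_mul_le K
    rw [le_div_iff₀ pi_pos] at h
    rw [show (4 * K + 2 - 2 : ℝ) = 4 * K by ring, le_div_iff₀ (by positivity)]
    linarith
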